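/- arXiv:2411.07221 — 2 statements merged into one kernel-verified Lean document; each statement's English description precedes it below -/
import Mathlib

section
/- Suppose R_M ⫫ (M, Y) | (X, A) and R_Y ⫫ Y | (X, A, M, R_M). Then (R_M, R_Y) ⫫ Y | (X, A, M). (That is, the 'second statement' of Assumption S1 implies its 'first statement' component S1-2.) -/
open scoped Classical

noncomputable def Pr {Ω : Type*} [Fintype Ω] (p : Ω → ℝ) (E : Ω → Prop) : ℝ :=
  ∑ ω, if E ω then p ω else 0

noncomputable def cPr {Ω : Type*} [Fintype Ω] (p : Ω → ℝ) (E F : Ω → Prop) : ℝ :=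
  Pr p (fun ω => E ω ∧ F ω) / Pr p F

noncomputable def odds {Ω : Type*} [Fintype Ω] (p : Ω → ℝ) (E F : Ω → Prop) : ℝ :=
  cPr p E F / cPr p (fun ω => ¬ E ω) F

/-!
An instance of the semi-graphoid axioms of conditional independence: decomposition and weak
union turn `R_M ⫫ (M, Y) | (X, A)` into `R_M ⫫ Y | (X, A, M)`, and contraction combines this
with `R_Y ⫫ Y | (X, A, M, R_M)` into `(R_M, R_Y) ⫫ Y | (X, A, M)`.
-/

section

variable {Ω : Type*} [Fintype Ω] {p : Ω → ℝ}

lemma Pr_congr (p : Ω → ℝ) {E F : Ω → Prop} (h : ∀ ω, E ω ↔ F ω) : Pr p E = Pr p F := by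
  simp only [Pr, h]

lemma Pr_nonneg (hp : ∀ ω, 0 ≤ p ω) (E : Ω → Prop) : 0 ≤ Pr p E :=
  Finset.sum_nonneg fun ω _ => by split_ifs <;> simp [hp ω]

lemma Pr_mono (hp : ∀ ω, 0 ≤ p ω) {E F : Ω → Prop} (h : ∀ ω, E ω → F ω) :
    Pr p E ≤ Pr p F :=
  Finset.sum_le_sum fun ω _ => by
    by_cases hE : E ω
    · simp [hE, h ω hE]
    · by_cases hF : F ω <;> simp [hE, hF, hp ω]

lemma Pr_eq_zero_of_imp (hp : ∀ ω, 0 ≤ p ω) {E F : Ω → Prop} (h : ∀ ω, E ω → F ω)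
    (hF : Pr p F = 0) : Pr p E = 0 :=
  le_antisymm (hF ▸ Pr_mono hp h) (Pr_nonneg hp E)

lemma sum_Pr_fiber {V : Type*} (p : Ω → ℝ) (f : Ω → V) (E : Ω → Prop) :
    ∑ v ∈ Finset.univ.image f, Pr p (fun ω => f ω = v ∧ E ω) = Pr p E := by
  unfold Pr
  rw [Finset.sum_comm]
  refine Finset.sum_congr rfl fun ω _ => ?_
  by_cases hE : E ω <;> simp [hE]

end

/-- `E ⫫ F | G` for events, in cross-multiplied form: it holds trivially when `P(G) = 0`. -/
def CondIndep {Ω : Type*} [Fintype Ω] (p : Ω → ℝ) (E F G : Ω → Prop) : Prop :=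
  Pr p (fun ω => (E ω ∧ F ω) ∧ G ω) * Pr p G = Pr p (fun ω => E ω ∧ G ω) * Pr p (fun ω => F ω ∧ G ω)

namespace CondIndep

variable {Ω : Type*} [Fintype Ω] {p : Ω → ℝ}

lemma congr_cond {E F G G' : Ω → Prop} (hG : ∀ ω, G ω ↔ G' ω) (h : CondIndep p E F G) :
    CondIndep p E F G' := by
  obtain rfl : G = G' := funext fun ω => propext (hG ω)
  exact h

lemma of_Pr_eq_zero (hp : ∀ ω, 0 ≤ p ω) {E F G : Ω → Prop} (hG : Pr p G = 0) :
    CondIndep p E F G := by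
  have hEG : Pr p (fun ω => E ω ∧ G ω) = 0 := Pr_eq_zero_of_imp hp (fun ω h => h.2) hG
  rw [CondIndep, hG, hEG, mul_zero, zero_mul]

lemma of_cPr_eq (hp : ∀ ω, 0 ≤ p ω) {E F G : Ω → Prop}
    (h : 0 < Pr p G → cPr p (fun ω => E ω ∧ F ω) G = cPr p E G * cPr p F G) :
    CondIndep p E F G := by
  rcases (Pr_nonneg hp G).eq_or_lt with hG | hG
  · exact of_Pr_eq_zero hp hG.symm
  · have := h hG
    unfold cPr at this
    field_simp at this
    exact this

lemma cPr_eq {E F G : Ω → Prop} (h : CondIndep p E F G) :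
    cPr p (fun ω => E ω ∧ F ω) G = cPr p E G * cPr p F G := by
  unfold cPr
  rcases eq_or_ne (Pr p G) 0 with hG | hG
  · simp [hG]
  · field_simp
    exact h

lemma of_forall_fiber {V : Type*} (f : Ω → V) {E F G : Ω → Prop}
    (h : ∀ v, CondIndep p E (fun ω => F ω ∧ f ω = v) G) : CondIndep p E F G := by
  have hsum := Finset.sum_congr rfl fun v (_ : v ∈ Finset.univ.image f) => h v
  simp only [← Finset.sum_mul, ← Finset.mul_sum] at hsum
  unfold CondIndep
  rw [← sum_Pr_fiber p f, ← sum_Pr_fiber p f (fun ω => F ω ∧ G ω)]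
  convert hsum using 2 <;>
    exact Finset.sum_congr rfl fun v _ => Pr_congr p fun ω => by tauto

lemma weak_union (hp : ∀ ω, 0 ≤ p ω) {R S T B : Ω → Prop} (hS : CondIndep p R S B)
    (hST : CondIndep p R (fun ω => S ω ∧ T ω) B) :
    CondIndep p R T (fun ω => S ω ∧ B ω) := by
  rcases (Pr_nonneg hp B).eq_or_lt with hB | hB
  · exact of_Pr_eq_zero hp (Pr_eq_zero_of_imp hp (fun ω h => h.2) hB.symm)
  unfold CondIndep at hS hST ⊢
  rw [Pr_congr p fun ω => show ((R ω ∧ T ω) ∧ S ω ∧ B ω) ↔ (R ω ∧ S ω ∧ T ω) ∧ B ω by tauto,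
    Pr_congr p fun ω => show (R ω ∧ S ω ∧ B ω) ↔ (R ω ∧ S ω) ∧ B ω by tauto,
    Pr_congr p fun ω => show (T ω ∧ S ω ∧ B ω) ↔ (S ω ∧ T ω) ∧ B ω by tauto]
  refine mul_right_cancel₀ hB.ne' ?_
  linear_combination Pr p (fun ω => S ω ∧ B ω) * hST - Pr p (fun ω => (S ω ∧ T ω) ∧ B ω) * hS

lemma contraction (hp : ∀ ω, 0 ≤ p ω) {R Q Y C : Ω → Prop} (hR : CondIndep p R Y C)
    (hQ : CondIndep p Q Y (fun ω => R ω ∧ C ω)) :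
    CondIndep p (fun ω => R ω ∧ Q ω) Y C := by
  rcases (Pr_nonneg hp (fun ω => R ω ∧ C ω)).eq_or_lt with hRC | hRC
  · have hRQC := Pr_eq_zero_of_imp hp (fun ω (h : (R ω ∧ Q ω) ∧ C ω) => ⟨h.1.1, h.2⟩) hRC.symm
    have hRQYC := Pr_eq_zero_of_imp hp
      (fun ω (h : ((R ω ∧ Q ω) ∧ Y ω) ∧ C ω) => ⟨h.1.1.1, h.2⟩) hRC.symm
    rw [CondIndep, hRQC, hRQYC, zero_mul, zero_mul]
  unfold CondIndep at hR hQ ⊢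
  rw [Pr_congr p fun ω => show (((R ω ∧ Q ω) ∧ Y ω) ∧ C ω) ↔ (Q ω ∧ Y ω) ∧ R ω ∧ C ω by tauto,
    Pr_congr p fun ω => show ((R ω ∧ Q ω) ∧ C ω) ↔ Q ω ∧ R ω ∧ C ω by tauto]
  rw [Pr_congr p fun ω => show (Y ω ∧ R ω ∧ C ω) ↔ (R ω ∧ Y ω) ∧ C ω by tauto] at hQ
  refine mul_right_cancel₀ hRC.ne' ?_
  linear_combination Pr p C * hQ + Pr p (fun ω => Q ω ∧ R ω ∧ C ω) * hR

end CondIndep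

theorem S1_second_implies_S1_2_general
    {Ω 𝒳 𝒜 ℳ 𝒴 ρM ρY : Type*} [Fintype Ω]
    (p : Ω → ℝ) (hp : ∀ ω, 0 ≤ p ω)
    (X : Ω → 𝒳) (A : Ω → 𝒜) (M : Ω → ℳ) (Y : Ω → 𝒴) (RM : Ω → ρM) (RY : Ω → ρY)
    -- R_M ⫫ (M, Y) ∣ (X, A)
    (h1 : ∀ (rm : ρM) (m : ℳ) (y : 𝒴) (x : 𝒳) (a : 𝒜),
      0 < Pr p (fun ω => X ω = x ∧ A ω = a) →
      cPr p (fun ω => RM ω = rm ∧ M ω = m ∧ Y ω = y) (fun ω => X ω = x ∧ A ω = a)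
        = cPr p (fun ω => RM ω = rm) (fun ω => X ω = x ∧ A ω = a)
          * cPr p (fun ω => M ω = m ∧ Y ω = y) (fun ω => X ω = x ∧ A ω = a))
    -- R_Y ⫫ Y ∣ (X, A, M, R_M)
    (h2 : ∀ (ry : ρY) (y : 𝒴) (x : 𝒳) (a : 𝒜) (m : ℳ) (rm : ρM),
      0 < Pr p (fun ω => X ω = x ∧ A ω = a ∧ M ω = m ∧ RM ω = rm) →
      cPr p (fun ω => RY ω = ry ∧ Y ω = y)
          (fun ω => X ω = x ∧ A ω = a ∧ M ω = m ∧ RM ω = rm)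
        = cPr p (fun ω => RY ω = ry) (fun ω => X ω = x ∧ A ω = a ∧ M ω = m ∧ RM ω = rm)
          * cPr p (fun ω => Y ω = y) (fun ω => X ω = x ∧ A ω = a ∧ M ω = m ∧ RM ω = rm)) :
    -- (R_M, R_Y) ⫫ Y ∣ (X, A, M)
    ∀ (rm : ρM) (ry : ρY) (y : 𝒴) (x : 𝒳) (a : 𝒜) (m : ℳ),
      0 < Pr p (fun ω => X ω = x ∧ A ω = a ∧ M ω = m) →
      cPr p (fun ω => RM ω = rm ∧ RY ω = ry ∧ Y ω = y)
          (fun ω => X ω = x ∧ A ω = a ∧ M ω = m)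
        = cPr p (fun ω => RM ω = rm ∧ RY ω = ry) (fun ω => X ω = x ∧ A ω = a ∧ M ω = m)
          * cPr p (fun ω => Y ω = y) (fun ω => X ω = x ∧ A ω = a ∧ M ω = m) := by
  intro rm ry y x a m _
  have hRM_MY (y' : 𝒴) : CondIndep p (fun ω => RM ω = rm) (fun ω => M ω = m ∧ Y ω = y')
      (fun ω => X ω = x ∧ A ω = a) :=
    CondIndep.of_cPr_eq hp (h1 rm m y' x a)
  have hRM_M : CondIndep p (fun ω => RM ω = rm) (fun ω => M ω = m)
      (fun ω => X ω = x ∧ A ω = a) :=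
    CondIndep.of_forall_fiber Y hRM_MY
  have hRM_Y : CondIndep p (fun ω => RM ω = rm) (fun ω => Y ω = y)
      (fun ω => X ω = x ∧ A ω = a ∧ M ω = m) :=
    (hRM_M.weak_union hp (hRM_MY y)).congr_cond fun _ => by tauto
  have hRY_Y : CondIndep p (fun ω => RY ω = ry) (fun ω => Y ω = y)
      (fun ω => RM ω = rm ∧ X ω = x ∧ A ω = a ∧ M ω = m) :=
    (CondIndep.of_cPr_eq hp (h2 ry y x a m rm)).congr_cond fun _ => by tauto
  simpa only [and_assoc] using (hRM_Y.contraction hp hRY_Y).cPr_eq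

/-- The second statement of Assumption S1 implies its first-statement component S1-2:
`(R_M, R_Y) ⫫ Y ∣ (X, A, M)`. -/
theorem S1_second_implies_S1_2
    {Ω 𝒳 𝒜 ℳ 𝒴 ρM ρY : Type*} [Fintype Ω]
    (p : Ω → ℝ) (hp : ∀ ω, 0 ≤ p ω) (hsum : ∑ ω, p ω = 1)
    (X : Ω → 𝒳) (A : Ω → 𝒜) (M : Ω → ℳ) (Y : Ω → 𝒴) (RM : Ω → ρM) (RY : Ω → ρY)
    -- R_M ⫫ (M, Y) ∣ (X, A)
    (h1 : ∀ (rm : ρM) (m : ℳ) (y : 𝒴) (x : 𝒳) (a : 𝒜),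
      0 < Pr p (fun ω => X ω = x ∧ A ω = a) →
      cPr p (fun ω => RM ω = rm ∧ M ω = m ∧ Y ω = y) (fun ω => X ω = x ∧ A ω = a)
        = cPr p (fun ω => RM ω = rm) (fun ω => X ω = x ∧ A ω = a)
          * cPr p (fun ω => M ω = m ∧ Y ω = y) (fun ω => X ω = x ∧ A ω = a))
    -- R_Y ⫫ Y ∣ (X, A, M, R_M)
    (h2 : ∀ (ry : ρY) (y : 𝒴) (x : 𝒳) (a : 𝒜) (m : ℳ) (rm : ρM),
      0 < Pr p (fun ω => X ω = x ∧ A ω = a ∧ M ω = m ∧ RM ω = rm) →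
      cPr p (fun ω => RY ω = ry ∧ Y ω = y)
          (fun ω => X ω = x ∧ A ω = a ∧ M ω = m ∧ RM ω = rm)
        = cPr p (fun ω => RY ω = ry) (fun ω => X ω = x ∧ A ω = a ∧ M ω = m ∧ RM ω = rm)
          * cPr p (fun ω => Y ω = y) (fun ω => X ω = x ∧ A ω = a ∧ M ω = m ∧ RM ω = rm))
    -- positivity of all conditioning events involved
    (hpos : ∀ (x : 𝒳) (a : 𝒜) (m : ℳ) (rm : ρM),
      0 < Pr p (fun ω => X ω = x ∧ A ω = a ∧ M ω = m ∧ RM ω = rm)) :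
    -- (R_M, R_Y) ⫫ Y ∣ (X, A, M)
    ∀ (rm : ρM) (ry : ρY) (y : 𝒴) (x : 𝒳) (a : 𝒜) (m : ℳ),
      0 < Pr p (fun ω => X ω = x ∧ A ω = a ∧ M ω = m) →
      cPr p (fun ω => RM ω = rm ∧ RY ω = ry ∧ Y ω = y)
          (fun ω => X ω = x ∧ A ω = a ∧ M ω = m)
        = cPr p (fun ω => RM ω = rm ∧ RY ω = ry) (fun ω => X ω = x ∧ A ω = a ∧ M ω = m)
          * cPr p (fun ω => Y ω = y) (fun ω => X ω = x ∧ A ω = a ∧ M ω = m) :=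
  S1_second_implies_S1_2_general p hp X A M Y RM RY h1 h2
end

section
/- Suppose R_M ⫫ M | (X, A, Y) and R_Y ⫫ (M, Y) | (X, A, R_M) (Model S5), with all relevant conditional probabilities strictly between 0 and 1. Then 1 / P(R_M = 1 | X, A, Y) = 1 + odds(R_M = 0 | X, A, Y, R_Y = 1) · [P(R_Y = 1 | X, A, R_M = 1) / P(R_Y = 1 | X, A, R_M = 0)]. -/
/-!
Write `N r = P(R_M = r, x, a, y)` and `q r = P(R_Y = 1 ∣ x, a, R_M = r)`. By the second
independence, `q r` is also the conditional probability of `R_Y = 1` on every fibre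
`{M = m, Y = y, X = x, A = a, R_M = r}`, so summing over the values of `M` gives
`P(R_M = r, R_Y = 1, x, a, y) = q r * N r`. Hence the odds of `R_M = 0` given `(x, a, y, R_Y = 1)`
are `q 0 * N 0 / (q 1 * N 1)`, and the right-hand side is `1 + N 0 / N 1 = (N 0 + N 1) / N 1`,
the inverse of `P(R_M = 1 ∣ x, a, y)`.
-/

open scoped Classical

section
variable {Ω : Type*} [Fintype Ω] {p : Ω → ℝ}

lemma Pr_and_add_Pr_not_and (p : Ω → ℝ) (E F : Ω → Prop) :
    Pr p (fun ω => E ω ∧ F ω) + Pr p (fun ω => ¬ E ω ∧ F ω) = Pr p F := by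
  simp only [Pr, ← Finset.sum_add_distrib]
  refine Finset.sum_congr rfl fun ω _ => ?_
  by_cases hE : E ω <;> by_cases hF : F ω <;> simp [hE, hF]

lemma Pr_eq_sum_fiber {ℳ : Type*} (p : Ω → ℝ) (M : Ω → ℳ) (E : Ω → Prop) :
    Pr p E = ∑ m ∈ Finset.univ.image M, Pr p (fun ω => M ω = m ∧ E ω) := by
  unfold Pr
  rw [Finset.sum_comm]
  refine Finset.sum_congr rfl fun ω _ => ?_
  by_cases hE : E ω
  · simp only [hE, and_true]
    rw [Finset.sum_ite_eq]
    simp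
  · simp [hE]

lemma odds_eq_div (p : Ω → ℝ) (E : Ω → Prop) {F : Ω → Prop} (hF : Pr p F ≠ 0) :
    odds p E F = Pr p (fun ω => E ω ∧ F ω) / Pr p (fun ω => ¬ E ω ∧ F ω) :=
  div_div_div_cancel_right₀ hF _ _

lemma Pr_and_eq_mul_of_cPr_fiber_eq (hp : ∀ ω, 0 ≤ p ω) {ℳ : Type*} (M : Ω → ℳ)
    {E C : Ω → Prop} {q : ℝ}
    (h : ∀ m, 0 < Pr p (fun ω => M ω = m ∧ C ω) → cPr p E (fun ω => M ω = m ∧ C ω) = q) :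
    Pr p (fun ω => E ω ∧ C ω) = q * Pr p C := by
  rw [Pr_eq_sum_fiber p M, Pr_eq_sum_fiber p M C, Finset.mul_sum]
  refine Finset.sum_congr rfl fun m _ => ?_
  have hcongr : Pr p (fun ω => M ω = m ∧ E ω ∧ C ω) = Pr p (fun ω => E ω ∧ M ω = m ∧ C ω) :=
    Pr_congr p fun ω => by tauto
  rw [hcongr]
  rcases (Pr_nonneg hp (fun ω => M ω = m ∧ C ω)).lt_or_eq with hpos | hzero
  · rw [← h m hpos, cPr, div_mul_cancel₀ _ hpos.ne']
  · have hle : Pr p (fun ω => E ω ∧ M ω = m ∧ C ω) ≤ 0 :=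
      hzero ▸ Pr_mono hp fun ω hω => hω.2
    rw [← hzero, mul_zero]
    exact le_antisymm hle (Pr_nonneg hp _)

end

theorem S5_inverse_propensity_general
    {Ω 𝒳 𝒜 ℳ 𝒴 : Type*} [Fintype Ω]
    (p : Ω → ℝ) (hp : ∀ ω, 0 ≤ p ω)
    (X : Ω → 𝒳) (A : Ω → 𝒜) (M : Ω → ℳ) (Y : Ω → 𝒴) (RM RY : Ω → ℕ)
    (hRM : ∀ ω, RM ω = 0 ∨ RM ω = 1)
    -- R_Y ⫫ (M, Y) ∣ (X, A, R_M)
    (h2 : ∀ (ry : ℕ) (m : ℳ) (y : 𝒴) (x : 𝒳) (a : 𝒜) (rm : ℕ),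
      0 < Pr p (fun ω => M ω = m ∧ Y ω = y ∧ X ω = x ∧ A ω = a ∧ RM ω = rm) →
      cPr p (fun ω => RY ω = ry)
          (fun ω => M ω = m ∧ Y ω = y ∧ X ω = x ∧ A ω = a ∧ RM ω = rm)
        = cPr p (fun ω => RY ω = ry) (fun ω => X ω = x ∧ A ω = a ∧ RM ω = rm)) :
    ∀ (x : 𝒳) (a : 𝒜) (y : 𝒴),
      (∀ r s : Fin 2, 0 < Pr p (fun ω => RM ω = (r : ℕ) ∧ RY ω = (s : ℕ) ∧
          X ω = x ∧ A ω = a ∧ Y ω = y)) →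
      1 / cPr p (fun ω => RM ω = 1) (fun ω => X ω = x ∧ A ω = a ∧ Y ω = y)
        = 1 + odds p (fun ω => RM ω = 0)
              (fun ω => X ω = x ∧ A ω = a ∧ Y ω = y ∧ RY ω = 1)
            * (cPr p (fun ω => RY ω = 1) (fun ω => X ω = x ∧ A ω = a ∧ RM ω = 1)
              / cPr p (fun ω => RY ω = 1) (fun ω => X ω = x ∧ A ω = a ∧ RM ω = 0)) := by
  intro x a y hpos
  have hnot : ∀ ω, ¬ RM ω = 0 ↔ RM ω = 1 := fun ω => by rcases hRM ω with h | h <;> simp [h]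
  set q : ℕ → ℝ := fun r => cPr p (fun ω => RY ω = 1) (fun ω => X ω = x ∧ A ω = a ∧ RM ω = r)
  set N : ℕ → ℝ := fun r => Pr p (fun ω => RM ω = r ∧ X ω = x ∧ A ω = a ∧ Y ω = y)
  have hB : ∀ r, Pr p (fun ω => RM ω = r ∧ RY ω = 1 ∧ X ω = x ∧ A ω = a ∧ Y ω = y)
      = q r * N r := fun r => by
    rw [Pr_congr p (F := fun ω => RY ω = 1 ∧ Y ω = y ∧ X ω = x ∧ A ω = a ∧ RM ω = r)
        fun ω => by tauto, Pr_and_eq_mul_of_cPr_fiber_eq hp M fun m => h2 1 m y x a r]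
    exact congrArg _ (Pr_congr p fun ω => by tauto)
  have hqpos : ∀ r : Fin 2, 0 < q r := fun r =>
    pos_of_mul_pos_left (hB r ▸ hpos r 1) (Pr_nonneg hp _)
  have hodds : odds p (fun ω => RM ω = 0) (fun ω => X ω = x ∧ A ω = a ∧ Y ω = y ∧ RY ω = 1)
      = q 0 * N 0 / (q 1 * N 1) := by
    have hF : 0 < Pr p (fun ω => X ω = x ∧ A ω = a ∧ Y ω = y ∧ RY ω = 1) :=
      (hpos 0 1).trans_le (Pr_mono hp fun ω hω => by tauto)
    rw [odds_eq_div p _ hF.ne', ← hB 0, ← hB 1]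
    simp only [hnot]
    congr 1 <;> exact Pr_congr p fun ω => by tauto
  have hprop : 1 / cPr p (fun ω => RM ω = 1) (fun ω => X ω = x ∧ A ω = a ∧ Y ω = y)
      = (N 0 + N 1) / N 1 := by
    rw [cPr, one_div_div, ← Pr_and_add_Pr_not_and p (fun ω => RM ω = 0)]
    simp only [hnot]
    rfl
  have hN1 : 0 < N 1 := (hpos 1 1).trans_le (Pr_mono hp fun ω hω => ⟨hω.1, hω.2.2⟩)
  have hq0 : 0 < q 0 := hqpos 0
  have hq1 : 0 < q 1 := hqpos 1
  rw [hodds, hprop]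
  change _ = 1 + _ * (q 1 / q 0)
  field_simp
  ring

/-- Expression for `1 / P(R_M = 1 ∣ X, A, Y)` under Model S5. -/
theorem S5_inverse_propensity
    {Ω 𝒳 𝒜 ℳ 𝒴 : Type*} [Fintype Ω]
    (p : Ω → ℝ) (hp : ∀ ω, 0 ≤ p ω) (hsum : ∑ ω, p ω = 1)
    (X : Ω → 𝒳) (A : Ω → 𝒜) (M : Ω → ℳ) (Y : Ω → 𝒴) (RM RY : Ω → ℕ)
    (hRM : ∀ ω, RM ω = 0 ∨ RM ω = 1) (hRY : ∀ ω, RY ω = 0 ∨ RY ω = 1)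
    -- R_M ⫫ M ∣ (X, A, Y)
    (h1 : ∀ (rm : ℕ) (m : ℳ) (x : 𝒳) (a : 𝒜) (y : 𝒴),
      0 < Pr p (fun ω => M ω = m ∧ X ω = x ∧ A ω = a ∧ Y ω = y) →
      cPr p (fun ω => RM ω = rm) (fun ω => M ω = m ∧ X ω = x ∧ A ω = a ∧ Y ω = y)
        = cPr p (fun ω => RM ω = rm) (fun ω => X ω = x ∧ A ω = a ∧ Y ω = y))
    -- R_Y ⫫ (M, Y) ∣ (X, A, R_M)
    (h2 : ∀ (ry : ℕ) (m : ℳ) (y : 𝒴) (x : 𝒳) (a : 𝒜) (rm : ℕ),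
      0 < Pr p (fun ω => M ω = m ∧ Y ω = y ∧ X ω = x ∧ A ω = a ∧ RM ω = rm) →
      cPr p (fun ω => RY ω = ry)
          (fun ω => M ω = m ∧ Y ω = y ∧ X ω = x ∧ A ω = a ∧ RM ω = rm)
        = cPr p (fun ω => RY ω = ry) (fun ω => X ω = x ∧ A ω = a ∧ RM ω = rm)) :
    ∀ (x : 𝒳) (a : 𝒜) (y : 𝒴),
      (∀ r s : Fin 2, 0 < Pr p (fun ω => RM ω = (r : ℕ) ∧ RY ω = (s : ℕ) ∧
          X ω = x ∧ A ω = a ∧ Y ω = y)) →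
      1 / cPr p (fun ω => RM ω = 1) (fun ω => X ω = x ∧ A ω = a ∧ Y ω = y)
        = 1 + odds p (fun ω => RM ω = 0)
              (fun ω => X ω = x ∧ A ω = a ∧ Y ω = y ∧ RY ω = 1)
            * (cPr p (fun ω => RY ω = 1) (fun ω => X ω = x ∧ A ω = a ∧ RM ω = 1)
              / cPr p (fun ω => RY ω = 1) (fun ω => X ω = x ∧ A ω = a ∧ RM ω = 0)) :=
  S5_inverse_propensity_general p hp X A M Y RM RY hRM h2
end
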